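/- arXiv:2003.04658 — 2 statements merged into one kernel-verified Lean document; each statement's English description precedes it below -/
import Mathlib

section
/- Under the same assumptions, the minimum over Φ of (αC + γβS) equals −√(max(α_lo², α_hi²) + (max Γ)² · max(0, −β_lo)²). -/
/-!
For fixed `α`, `β`, `γ` the expression is a linear form `p C + q S` on the upper unit
semicircle, whose minimum is `-√(p² + max 0 (-q)²)`: when `q < 0` it is the full circle
minimum `-√(p² + q²)`, and when `q ≥ 0` the point `(-sign p, 0)` wins. This is decreasing in
`p² = α²` and in `max 0 (-γβ)`, which are largest at the endpoint of `[α_lo, α_hi]` of larger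
modulus and at `β = β_lo`, `γ = max Γ`.
-/

lemma mul_add_mul_le_sqrt_of_sq_add_sq_eq_one {p q C S : ℝ} (h : C ^ 2 + S ^ 2 = 1) :
    p * C + q * S ≤ √(p ^ 2 + q ^ 2) :=
  (le_abs_self _).trans (Real.abs_le_sqrt (by nlinarith [sq_nonneg (p * S - q * C)]))

lemma isLeast_upperSemicircle_mul_add_mul (p q : ℝ) :
    IsLeast {x : ℝ | ∃ C S : ℝ, C ^ 2 + S ^ 2 = 1 ∧ 0 ≤ S ∧ x = p * C + q * S}
      (-√(p ^ 2 + max 0 (-q) ^ 2)) := by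
  set m := max 0 (-q)
  have hm : 0 ≤ m := le_max_left _ _
  have hmq : -q ≤ m := le_max_right _ _
  have hqm : q * m = -m ^ 2 := by
    rcases le_total q 0 with hq | hq
    · rw [show m = -q from max_eq_right (by linarith)]; ring
    · rw [show m = 0 from max_eq_left (by linarith)]; ring
  set r := √(p ^ 2 + m ^ 2) with hr_def
  have hr2 : r ^ 2 = p ^ 2 + m ^ 2 := Real.sq_sqrt (by positivity)
  have hr0 : 0 ≤ r := Real.sqrt_nonneg _
  clear_value r m
  constructor
  · rcases hr0.eq_or_lt with hr | hr
    · have hp : p = 0 := by nlinarith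
      exact ⟨1, 0, by norm_num, le_rfl, by rw [← hr, hp]; ring⟩
    · have hr_ne : r ≠ 0 := hr.ne'
      refine ⟨-p / r, m / r, ?_, by positivity, ?_⟩
      · field_simp
        linear_combination -hr2
      · field_simp
        linear_combination -hr2 - hqm
  · rintro x ⟨C, S, hCS, hS, rfl⟩
    have hcs : -p * C + m * S ≤ √((-p) ^ 2 + m ^ 2) :=
      mul_add_mul_le_sqrt_of_sq_add_sq_eq_one hCS
    rw [neg_sq, ← hr_def] at hcs
    have hqS : -m * S ≤ q * S := mul_le_mul_of_nonneg_right (neg_le.mp hmq) hS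
    linarith

lemma sq_le_max_sq_of_mem_Icc {a b x : ℝ} (hx : x ∈ Set.Icc a b) :
    x ^ 2 ≤ max (a ^ 2) (b ^ 2) := by
  rcases le_total 0 x with h | h
  · exact (pow_le_pow_left₀ h hx.2 2).trans (le_max_right _ _)
  · exact (by nlinarith [hx.1] : x ^ 2 ≤ a ^ 2).trans (le_max_left _ _)

lemma exists_mem_Icc_sq_eq_max_sq {a b : ℝ} (hab : a ≤ b) :
    ∃ x ∈ Set.Icc a b, x ^ 2 = max (a ^ 2) (b ^ 2) := by
  rcases le_total (a ^ 2) (b ^ 2) with h | h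
  · exact ⟨b, ⟨hab, le_rfl⟩, (max_eq_right h).symm⟩
  · exact ⟨a, ⟨le_rfl, hab⟩, (max_eq_left h).symm⟩

lemma max_zero_neg_mul_of_nonneg {γ β : ℝ} (hγ : 0 ≤ γ) :
    max 0 (-(γ * β)) = γ * max 0 (-β) := by
  rw [mul_max_of_nonneg _ _ hγ, mul_zero, mul_neg]

lemma max_zero_neg_mul_le {γ β M βlo : ℝ} (hγ : 0 ≤ γ) (hγM : γ ≤ M) (hβ : βlo ≤ β) :
    max 0 (-(γ * β)) ≤ M * max 0 (-βlo) := by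
  rw [max_zero_neg_mul_of_nonneg hγ]
  exact mul_le_mul hγM (max_le_max le_rfl (neg_le_neg hβ)) (le_max_left _ _)
    (hγ.trans hγM)

theorem min_over_Phi (αlo αhi βlo βhi : ℝ) (Γ : Finset ℝ)
    (hα : αlo ≤ αhi) (hβ : βlo ≤ βhi) (hΓ : Γ.Nonempty)
    (hΓpos : ∀ γ ∈ Γ, 0 ≤ γ) :
    IsLeast {x : ℝ | ∃ α β γ C S : ℝ, α ∈ Set.Icc αlo αhi ∧
        β ∈ Set.Icc βlo βhi ∧ γ ∈ Γ ∧ C ^ 2 + S ^ 2 = 1 ∧ 0 ≤ S ∧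
        x = α * C + γ * β * S}
      (-Real.sqrt (max (αlo ^ 2) (αhi ^ 2) +
        (Γ.max' hΓ) ^ 2 * max 0 (-βlo) ^ 2)) := by
  set M := Γ.max' hΓ
  have hM : 0 ≤ M := hΓpos _ (Γ.max'_mem hΓ)
  constructor
  · obtain ⟨α, hαmem, hα2⟩ := exists_mem_Icc_sq_eq_max_sq hα
    obtain ⟨C, S, hCS, hS, hx⟩ := (isLeast_upperSemicircle_mul_add_mul α (M * βlo)).1
    refine ⟨α, βlo, M, C, S, hαmem, ⟨le_rfl, hβ⟩, Γ.max'_mem hΓ, hCS, hS, ?_⟩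
    rw [← hx, ← hα2, max_zero_neg_mul_of_nonneg hM, mul_pow]
  · rintro _ ⟨α, β, γ, C, S, hαmem, hβmem, hγ, hCS, hS, rfl⟩
    have hmax := max_zero_neg_mul_le (hΓpos γ hγ) (Γ.le_max' γ hγ) hβmem.1
    calc -√(max (αlo ^ 2) (αhi ^ 2) + M ^ 2 * max 0 (-βlo) ^ 2)
        ≤ -√(α ^ 2 + max 0 (-(γ * β)) ^ 2) := by
          rw [neg_le_neg_iff, ← mul_pow]
          gcongr
          exact sq_le_max_sq_of_mem_Icc hαmem
      _ ≤ α * C + γ * β * S :=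
          (isLeast_upperSemicircle_mul_add_mul α (γ * β)).2 ⟨C, S, hCS, hS, rfl⟩
end

section
/- Let a_s be a complex number with Re(a_s) > 0, and let a_H > 1, a_L > 1 be reals. For each N ≥ 1, define D_N = |a_s|²/P_N² + P_N² + 2Re(a_s), where P_N = a_H^⌈N/2⌉ · a_L^⌊N/2⌋. Then D_N → ∞ as N → ∞, and consequently 1 − 4Re(a_s)/D_N → 1 as N → ∞. -/
open Filter

/-! Since `a_H ≥ 1`, the product `P_N` dominates `a_L ^ ⌊N/2⌋`, which tends to infinity; hence so
does `D_N ≥ P_N²`, and `4 Re(a_s) / D_N → 0`. -/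

theorem tendsto_pow_succ_div_two_mul_pow_div_two_atTop {a b : ℝ} (ha : 1 ≤ a) (hb : 1 < b) :
    Tendsto (fun N : ℕ => a ^ ((N + 1) / 2) * b ^ (N / 2)) atTop atTop := by
  have hb_half : Tendsto (fun N : ℕ => b ^ (N / 2)) atTop atTop :=
    (tendsto_pow_atTop_atTop_of_one_lt hb).comp (Nat.tendsto_div_const_atTop two_ne_zero)
  refine tendsto_atTop_mono (fun N => ?_) hb_half
  exact le_mul_of_one_le_left (pow_nonneg (zero_le_one.trans hb.le) _) (one_le_pow₀ ha)

theorem Filter.Tendsto.div_sq_add_sq_add_const_atTop {ι : Type*} {l : Filter ι} {P : ι → ℝ}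
    (hP : Tendsto P l atTop) {x : ℝ} (hx : 0 ≤ x) (c : ℝ) :
    Tendsto (fun i => x / P i ^ 2 + P i ^ 2 + c) l atTop :=
  tendsto_atTop_add_const_right _ c <|
    ((tendsto_pow_atTop two_ne_zero).comp hP).nonneg_add_atTop fun _ =>
      div_nonneg hx (sq_nonneg _)

theorem heuristic_reflectance_tendsto_one_general (as : ℂ) (aH aL : ℝ)
    (hH : 1 < aH) (hL : 1 < aL) :
    Tendsto (fun N : ℕ =>
        Complex.normSq as / (aH ^ ((N + 1) / 2) * aL ^ (N / 2)) ^ 2 +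
          (aH ^ ((N + 1) / 2) * aL ^ (N / 2)) ^ 2 + 2 * as.re)
      atTop atTop ∧
    Tendsto (fun N : ℕ => 1 - 4 * as.re /
        (Complex.normSq as / (aH ^ ((N + 1) / 2) * aL ^ (N / 2)) ^ 2 +
          (aH ^ ((N + 1) / 2) * aL ^ (N / 2)) ^ 2 + 2 * as.re))
      atTop (nhds 1) := by
  have hP := tendsto_pow_succ_div_two_mul_pow_div_two_atTop hH.le hL
  have hD := hP.div_sq_add_sq_add_const_atTop (Complex.normSq_nonneg as) (2 * as.re)
  refine ⟨hD, ?_⟩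
  simpa using tendsto_const_nhds.sub (tendsto_const_nhds.div_atTop hD)

theorem heuristic_reflectance_tendsto_one (as : ℂ) (aH aL : ℝ)
    (hre : 0 < as.re) (hH : 1 < aH) (hL : 1 < aL) :
    Tendsto (fun N : ℕ =>
        Complex.normSq as / (aH ^ ((N + 1) / 2) * aL ^ (N / 2)) ^ 2 +
          (aH ^ ((N + 1) / 2) * aL ^ (N / 2)) ^ 2 + 2 * as.re)
      atTop atTop ∧
    Tendsto (fun N : ℕ => 1 - 4 * as.re /
        (Complex.normSq as / (aH ^ ((N + 1) / 2) * aL ^ (N / 2)) ^ 2 +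
          (aH ^ ((N + 1) / 2) * aL ^ (N / 2)) ^ 2 + 2 * as.re))
      atTop (nhds 1) :=
  heuristic_reflectance_tendsto_one_general as aH aL hH hL
end
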